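/- Let p be a prime with p ≡ 3 (mod 4) and let d ∈ F_p with d ≠ 0 and d ≠ 1, and suppose the supersingularity condition Σ_{j=0}^{(p−1)/2} binom((p−1)/2, j)² · d^j = 0 holds in F_p. Then the Edwards curves with coefficients d and d^{−1} have the same number of affine points: N_d = N_{d^{−1}}. -/

import Mathlib

/-!
Let `χ` be the quadratic character and `S(d) = ∑_y χ((1 - y²)(1 - d y²))`. Solving the curve
equation for `y²` gives `N_d = p - 1 - χ(d) + S(d)`, and the substitution `y ↦ y⁻¹` gives
`S(d⁻¹) = χ(d) S(d) + 1 - χ(d)`. Hence `N_d = N_{d⁻¹}` is automatic for a square `d`, and for a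
nonsquare `d` it amounts to `S(d) = 1`.

Modulo `p` we have `χ(a) = a^m` with `m = (p - 1) / 2`, and summing powers of `y` over `𝔽_p` picks
out the coefficients of `t^m` and `t^(2m)` in `((1 - t)(1 - d t))^m`, which are
`(-1)^m ∑_j C(m, j)² d^j` and `d^m`. Under the supersingularity condition this gives
`S(d) ≡ -d^m (mod p)`, which is `1` for a nonsquare `d`; since the terms at `y = ±1` vanish,
`|S(d)| ≤ p - 2`, so `S(d) = 1`.
-/

open Finset

/-- The number of affine points of the Edwards curve `x² + y² = 1 + d x² y²` over `ZMod p`. -/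
noncomputable def edwardsCard (p : ℕ) (d : ZMod p) : ℕ :=
  Nat.card {xy : ZMod p × ZMod p // xy.1 ^ 2 + xy.2 ^ 2 = 1 + d * xy.1 ^ 2 * xy.2 ^ 2}

open Polynomial

namespace FiniteField

variable {F : Type*} [Field F] [Fintype F]

theorem sum_pow_eq_ite {i : ℕ} (hi : i ≠ 0) :
    ∑ x : F, x ^ i = if Fintype.card F - 1 ∣ i then -1 else 0 := by
  classical
  rw [← sum_pow_units]
  refine (sum_of_injOn (↑) Units.val_injective.injOn (by simp) (fun x _ hx => ?_) (by simp)).symm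
  obtain rfl : x = 0 := by
    by_contra h
    exact hx ⟨Units.mk0 x h, by simp, rfl⟩
  exact zero_pow hi

theorem sum_pow_two_mul {m k : ℕ} (hq : Fintype.card F = 2 * m + 1) (hk : k ≤ 2 * m) :
    ∑ x : F, x ^ (2 * k) = -((if k = m then 1 else 0) + if k = 2 * m then 1 else 0) := by
  have hm : m ≠ 0 := by
    have := Fintype.one_lt_card (α := F)
    omega
  rcases Nat.eq_zero_or_pos k with rfl | hk0
  · simp [hm, Ne.symm hm]
  have hdvd : 2 * m ∣ 2 * k ↔ k = m ∨ k = 2 * m := by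
    rw [Nat.mul_dvd_mul_iff_left two_pos]
    constructor
    · rintro ⟨c, rfl⟩
      have : c ≤ 2 := Nat.le_of_mul_le_mul_left (by omega) (Nat.pos_of_ne_zero hm)
      interval_cases c <;> omega
    · rintro (rfl | rfl)
      exacts [dvd_rfl, dvd_mul_left m 2]
  rw [sum_pow_eq_ite (by omega), hq, Nat.add_sub_cancel]
  simp only [hdvd]
  split_ifs <;> first | omega | norm_num

theorem sum_eval_sq {m : ℕ} (hq : Fintype.card F = 2 * m + 1) {g : F[X]}
    (hg : g.natDegree ≤ 2 * m) :
    ∑ y : F, g.eval (y ^ 2) = -(g.coeff m + g.coeff (2 * m)) := by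
  simp_rw [eval_eq_sum_range' (Nat.lt_succ_of_le hg), ← pow_mul]
  rw [sum_comm]
  simp_rw [← mul_sum]
  rw [sum_congr rfl fun k hk => by rw [sum_pow_two_mul hq (Nat.lt_succ_iff.mp (mem_range.mp hk))]]
  have hm : m < 2 * m + 1 := by omega
  simp [hm, mul_add, sum_add_distrib]

end FiniteField

namespace Polynomial

variable {R : Type*} [CommRing R]

noncomputable def edwardsQuadratic (d : R) : R[X] :=
  (1 - X) * (1 - C d * X)

theorem coeff_one_sub_C_mul_X_pow (a : R) (m j : ℕ) :
    ((1 - C a * X) ^ m).coeff j = m.choose j * (-a) ^ j := by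
  have h : (1 - C a * X : R[X]) = (1 + X).comp (C (-a) * X) := by
    simp only [add_comp, one_comp, X_comp, C_neg, neg_mul]
    ring
  rw [h, ← pow_comp, comp_C_mul_X_coeff, coeff_one_add_X_pow]

theorem natDegree_edwardsQuadratic_le (d : R) : (edwardsQuadratic d).natDegree ≤ 2 := by
  unfold edwardsQuadratic
  compute_degree

theorem coeff_edwardsQuadratic_two (d : R) : (edwardsQuadratic d).coeff 2 = d := by
  simp [edwardsQuadratic, sub_mul, mul_sub, coeff_X, coeff_one]

theorem coeff_edwardsQuadratic_pow_self (d : R) (m : ℕ) :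
    (edwardsQuadratic d ^ m).coeff m =
      (-1) ^ m * ∑ j ∈ range (m + 1), (m.choose j : R) ^ 2 * d ^ j := by
  have h1 : (1 - X : R[X]) = 1 - C 1 * X := by rw [C_1, one_mul]
  rw [edwardsQuadratic, mul_pow, h1, coeff_mul, ← Nat.sum_antidiagonal_swap,
    Nat.sum_antidiagonal_eq_sum_range_succ_mk, mul_sum]
  refine sum_congr rfl fun j hj => ?_
  have hjm : j ≤ m := Nat.lt_succ_iff.mp (mem_range.mp hj)
  simp only [Prod.swap_prod_mk, coeff_one_sub_C_mul_X_pow, Nat.choose_symm hjm]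
  rw [neg_pow d, ← pow_sub_mul_pow (-1 : R) hjm]
  ring

theorem coeff_edwardsQuadratic_pow_two_mul (d : R) (m : ℕ) :
    (edwardsQuadratic d ^ m).coeff (2 * m) = d ^ m := by
  rw [mul_comm 2, coeff_pow_of_natDegree_le (natDegree_edwardsQuadratic_le d),
    coeff_edwardsQuadratic_two]

end Polynomial

section EdwardsCharSum

variable {F : Type*} [Field F] [Fintype F] [DecidableEq F]

def edwardsCharSum (d : F) : ℤ :=
  ∑ y : F, quadraticChar F ((1 - y ^ 2) * (1 - d * y ^ 2))

theorem quadraticChar_inv (a : F) : quadraticChar F a⁻¹ = quadraticChar F a := by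
  simpa [MulChar.inv_apply'] using
    congrArg (fun χ : MulChar F ℤ => χ a) (quadraticChar_isQuadratic F).inv

theorem card_filter_mul_sq_eq (hF : ringChar F ≠ 2) {c e : F} (h : c ≠ 0 ∨ e ≠ 0) :
    (#{y | c * y ^ 2 = e} : ℤ) = quadraticChar F (c * e) + 1 - if c = 0 then 1 else 0 := by
  rcases eq_or_ne c 0 with rfl | hc
  · simp [h.resolve_left (not_not_intro rfl), eq_comm]
  · have hsqrt : univ.filter (fun y : F => c * y ^ 2 = e) = {y : F | y ^ 2 = e / c}.toFinset := by
      ext y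
      simp [eq_div_iff hc, mul_comm]
    have hχ : quadraticChar F (c * e) = quadraticChar F (e / c) := by
      rw [show c * e = e / c * c ^ 2 by field_simp, map_mul, quadraticChar_sq_one' hc, mul_one]
    rw [hsqrt, quadraticChar_card_sqrts hF, hχ, if_neg hc, sub_zero]

theorem card_edwards (hF : ringChar F ≠ 2) {d : F} (hd0 : d ≠ 0) (hd1 : d ≠ 1) :
    (Fintype.card {xy : F × F // xy.1 ^ 2 + xy.2 ^ 2 = 1 + d * xy.1 ^ 2 * xy.2 ^ 2} : ℤ) =
      Fintype.card F - 1 - quadraticChar F d + edwardsCharSum d := by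
  have hfiber : ∀ x : F, (#{y | x ^ 2 + y ^ 2 = 1 + d * x ^ 2 * y ^ 2} : ℤ) =
      quadraticChar F ((1 - x ^ 2) * (1 - d * x ^ 2)) + 1 - if 1 - d * x ^ 2 = 0 then 1 else 0 := by
    intro x
    have hcurve : univ.filter (fun y : F => x ^ 2 + y ^ 2 = 1 + d * x ^ 2 * y ^ 2) =
        univ.filter fun y => (1 - d * x ^ 2) * y ^ 2 = 1 - x ^ 2 :=
      filter_congr fun y _ => by constructor <;> intro h <;> linear_combination h
    rw [hcurve, card_filter_mul_sq_eq hF, mul_comm]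
    by_contra! h
    exact hd1 (by linear_combination -h.1 + d * h.2)
  have hpoles : (#{x | 1 - d * x ^ 2 = 0} : ℤ) = quadraticChar F d + 1 := by
    simp_rw [sub_eq_zero, eq_comm (a := (1 : F))]
    rw [card_filter_mul_sq_eq hF (Or.inl hd0), mul_one, if_neg hd0, sub_zero]
  rw [Fintype.card_subtype, card_filter, Fintype.sum_prod_type]
  simp_rw [← card_filter]
  push_cast
  simp only [hfiber, sum_add_distrib, sum_sub_distrib, sum_boole]
  rw [hpoles, edwardsCharSum]
  simp only [sum_const, card_univ, Int.nsmul_eq_mul, mul_one]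
  ring

theorem edwardsCharSum_inv {d : F} (hd : d ≠ 0) :
    edwardsCharSum d⁻¹ = quadraticChar F d * edwardsCharSum d + 1 - quadraticChar F d := by
  have hterm : ∀ y : F, quadraticChar F ((1 - y⁻¹ ^ 2) * (1 - d⁻¹ * y⁻¹ ^ 2)) =
      quadraticChar F d * quadraticChar F ((1 - y ^ 2) * (1 - d * y ^ 2)) +
        if y = 0 then 1 - quadraticChar F d else 0 := by
    intro y
    rcases eq_or_ne y 0 with rfl | hy
    · simp
    · have hsq : (1 - y⁻¹ ^ 2) * (1 - d⁻¹ * y⁻¹ ^ 2) =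
          d * (d⁻¹ * y⁻¹ ^ 2) ^ 2 * ((1 - y ^ 2) * (1 - d * y ^ 2)) := by
        field_simp
        ring
      rw [hsq, map_mul, map_mul, quadraticChar_sq_one' (by simp [hd, hy]), if_neg hy]
      ring
  rw [edwardsCharSum, ← Equiv.sum_comp (Equiv.inv F)]
  simp only [Equiv.inv_apply, hterm, sum_add_distrib, ← mul_sum, sum_ite_eq', mem_univ, if_true]
  rw [edwardsCharSum]
  ring

theorem abs_edwardsCharSum_le (hF : ringChar F ≠ 2) (d : F) :
    |edwardsCharSum d| ≤ Fintype.card F - 2 := by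
  have hvanish : ∀ y ∈ univ, y ∉ univ \ {1, -1} →
      quadraticChar F ((1 - y ^ 2) * (1 - d * y ^ 2)) = 0 := by
    intro y _ hy
    rcases (by simpa [or_iff_not_imp_left] using hy : y = 1 ∨ y = -1) with rfl | rfl <;> simp
  have hcard : #(univ \ {1, -1} : Finset F) = Fintype.card F - 2 := by
    rw [card_univ_sdiff, card_pair (Ring.neg_one_ne_one_of_char_ne_two hF).symm]
  rw [edwardsCharSum, ← sum_subset (subset_univ _) hvanish]
  calc |∑ y ∈ univ \ {1, -1}, quadraticChar F ((1 - y ^ 2) * (1 - d * y ^ 2))|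
      ≤ ∑ y ∈ univ \ {1, -1}, |quadraticChar F ((1 - y ^ 2) * (1 - d * y ^ 2))| :=
        abs_sum_le_sum_abs _ _
    _ ≤ #(univ \ {1, -1} : Finset F) • (1 : ℤ) := by
        refine sum_le_card_nsmul _ _ _ fun y _ => ?_
        rcases quadraticChar_isQuadratic F ((1 - y ^ 2) * (1 - d * y ^ 2)) with h | h | h <;>
          simp [h]
    _ = Fintype.card F - 2 := by
        have : 2 ≤ Fintype.card F := Fintype.one_lt_card
        rw [hcard, nsmul_one]
        omega

theorem edwardsCharSum_cast {m : ℕ} (hq : Fintype.card F = 2 * m + 1) (d : F) :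
    (edwardsCharSum d : F) =
      -((-1) ^ m * ∑ j ∈ range (m + 1), (m.choose j : F) ^ 2 * d ^ j + d ^ m) := by
  have hF : ringChar F ≠ 2 := by
    rw [Ne, FiniteField.even_card_iff_char_two, hq]
    omega
  have hpow (a : F) : (quadraticChar F a : F) = a ^ m := by
    rw [quadraticChar_eq_pow_of_char_ne_two' hF, hq]
    congr 1
    omega
  have heval (y : F) :
      ((1 - y ^ 2) * (1 - d * y ^ 2)) ^ m = (edwardsQuadratic d ^ m).eval (y ^ 2) := by
    simp [edwardsQuadratic]
  have hdeg : (edwardsQuadratic d ^ m).natDegree ≤ 2 * m :=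
    (natDegree_pow_le_of_le m (natDegree_edwardsQuadratic_le d)).trans_eq (mul_comm m 2)
  rw [edwardsCharSum, Int.cast_sum]
  simp_rw [hpow, heval]
  rw [FiniteField.sum_eval_sq hq hdeg, coeff_edwardsQuadratic_pow_self,
    coeff_edwardsQuadratic_pow_two_mul]

end EdwardsCharSum

theorem edwardsCharSum_eq_one_of_supersingular {p : ℕ} [Fact p.Prime] (hp2 : p ≠ 2)
    {d : ZMod p} (hχ : quadraticChar (ZMod p) d = -1)
    (hss : ∑ j ∈ range ((p - 1) / 2 + 1), (((p - 1) / 2).choose j : ZMod p) ^ 2 * d ^ j = 0) :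
    edwardsCharSum d = 1 := by
  have hF : ringChar (ZMod p) ≠ 2 := by rwa [ZMod.ringChar_zmod_n]
  have hq : Fintype.card (ZMod p) = 2 * ((p - 1) / 2) + 1 := by
    have := Nat.odd_iff.mp ((Fact.out : p.Prime).odd_of_ne_two hp2)
    rw [ZMod.card]
    omega
  have hdm : d ^ ((p - 1) / 2) = -1 := by
    have := quadraticChar_eq_pow_of_char_ne_two' hF d
    rw [hχ, hq, Nat.mul_add_div two_pos] at this
    simpa using this.symm
  have hdvd : (p : ℤ) ∣ edwardsCharSum d - 1 := by
    rw [← ZMod.intCast_zmod_eq_zero_iff_dvd, Int.cast_sub, edwardsCharSum_cast hq, hss, hdm]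
    ring
  obtain ⟨hlo, hhi⟩ := abs_le.mp (abs_edwardsCharSum_le hF d)
  rw [ZMod.card] at hlo hhi
  exact sub_eq_zero.mp (Int.eq_zero_of_abs_lt_dvd hdvd (abs_lt.mpr ⟨by linarith, by linarith⟩))

theorem stmt1_general (p : ℕ) [Fact p.Prime] (d : ZMod p)
    (hd0 : d ≠ 0) (hd1 : d ≠ 1)
    (hss : ∑ j ∈ range ((p - 1) / 2 + 1),
      (((p - 1) / 2).choose j : ZMod p) ^ 2 * d ^ j = 0) :
    edwardsCard p d = edwardsCard p d⁻¹ := by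
  have hp2 : p ≠ 2 := by
    rintro rfl
    fin_cases d
    exacts [hd0 rfl, hd1 rfl]
  have hF : ringChar (ZMod p) ≠ 2 := by rwa [ZMod.ringChar_zmod_n]
  have hcard (e : ZMod p) (he0 : e ≠ 0) (he1 : e ≠ 1) : (edwardsCard p e : ℤ) =
      p - 1 - quadraticChar (ZMod p) e + edwardsCharSum e := by
    rw [edwardsCard, Nat.card_eq_fintype_card, card_edwards hF he0 he1, ZMod.card]
  zify
  rw [hcard d hd0 hd1, hcard d⁻¹ (inv_ne_zero hd0) (inv_ne_one.mpr hd1), quadraticChar_inv,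
    edwardsCharSum_inv hd0]
  rcases quadraticChar_dichotomy hd0 with hχ | hχ
  · rw [hχ]
    ring
  · rw [hχ, edwardsCharSum_eq_one_of_supersingular hp2 hχ hss]
    ring

theorem stmt1 (p : ℕ) [Fact p.Prime] (hp : p % 4 = 3) (d : ZMod p)
    (hd0 : d ≠ 0) (hd1 : d ≠ 1)
    (hss : ∑ j ∈ range ((p - 1) / 2 + 1),
      (((p - 1) / 2).choose j : ZMod p) ^ 2 * d ^ j = 0) :
    edwardsCard p d = edwardsCard p d⁻¹ :=
  stmt1_general p d hd0 hd1 hss
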